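/- arXiv:1105.5798 — 3 statements merged into one kernel-verified Lean document; each statement's English description precedes it below -/
import Mathlib

section
/- Let k be a positive integer, r > 0, and suppose reals δ_j ≥ 0, β*_j ≥ 0, and σ_j ∈ {−1, 0, 1} for 0 ≤ j ≤ k−1, together with a real number R of the form R = k − σ_k β*_k (with σ_k ∈ {−1,0,1}, β*_k ≥ 0), satisfy: (i) ∑_{j=0}^{k−1} (δ_j + r β*_j) = 1, (ii) ∑_{j=0}^{k−1} (j δ_j + (r j + σ_j) β*_j) = k − σ_k β*_k, (iii) ∑_{j=0}^{k−1} (j² δ_j + (r j² + 2 j σ_j) β*_j) = k(k − 2 σ_k β*_k). Then r ≤ 2. -/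
/-! Subtracting `2k` times the first-order condition and adding `k²` times the zeroth-order one
from the second-order condition tests the method on the polynomial `(x - k)²`, which vanishes to
second order at `x = k`; this eliminates `σₖ βₖ` and leaves
`∑ⱼ ((j - k)² δⱼ + (r (j - k)² + 2 (j - k) σⱼ) β*ⱼ) = 0`.
Since `j - k ≤ -1` and `σⱼ ≤ 1`, for `r ≥ 2` each summand is at least `(1 - 2/r) (δⱼ + r β*ⱼ)`,
and these add up to `1 - 2/r` by the zeroth-order condition, so `r > 2` is impossible. -/

open Finset

theorem sum_sq_sub_moment_eq (s : Finset ℕ) (c r : ℝ) (δ β σ : ℕ → ℝ) :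
    ∑ j ∈ s, (((j : ℝ) - c) ^ 2 * δ j + (r * ((j : ℝ) - c) ^ 2 + 2 * ((j : ℝ) - c) * σ j) * β j)
      = ∑ j ∈ s, ((j : ℝ) ^ 2 * δ j + (r * j ^ 2 + 2 * j * σ j) * β j)
        - 2 * c * ∑ j ∈ s, ((j : ℝ) * δ j + (r * j + σ j) * β j)
        + c ^ 2 * ∑ j ∈ s, (δ j + r * β j) := by
  rw [mul_sum, mul_sum, ← sum_sub_distrib, ← sum_add_distrib]
  exact sum_congr rfl fun j _ => by ring

theorem sub_two_mul_le_mul_of_le_neg_one {r t σ δ β : ℝ} (hr : 2 ≤ r) (ht : t ≤ -1)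
    (hσ : σ ≤ 1) (hδ : 0 ≤ δ) (hβ : 0 ≤ β) :
    (r - 2) * (δ + r * β) ≤ r * (t ^ 2 * δ + (r * t ^ 2 + 2 * t * σ) * β) := by
  have hr0 : 0 ≤ r := by linarith
  have hδ' : (r - 2) * δ ≤ r * (t ^ 2 * δ) := by
    have ht2 : 1 ≤ t ^ 2 := by nlinarith
    nlinarith [mul_le_mul_of_nonneg_left ht2 (mul_nonneg hr0 hδ)]
  -- `r t² + 2 t - (r - 2) = (t + 1) (r (t - 1) + 2)` is a product of two nonpositive factors.
  have hcoef : r - 2 ≤ r * t ^ 2 + 2 * t * σ := by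
    nlinarith [mul_nonneg_of_nonpos_of_nonpos (by linarith : t + 1 ≤ 0)
        (by nlinarith : r * (t - 1) + 2 ≤ 0),
      mul_nonneg (by linarith : 0 ≤ 1 - σ) (by linarith : 0 ≤ -t)]
  nlinarith [mul_le_mul_of_nonneg_right hcoef (mul_nonneg hr0 hβ)]

theorem dwssp_lmm_bound_general (k : ℕ) (r : ℝ)
    (δ βs σ : ℕ → ℝ) (σk βk : ℝ)
    (hδ : ∀ j < k, 0 ≤ δ j) (hβ : ∀ j < k, 0 ≤ βs j)
    (hσ : ∀ j < k, σ j = -1 ∨ σ j = 0 ∨ σ j = 1)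
    (h0 : ∑ j ∈ range k, (δ j + r * βs j) = 1)
    (h1 : ∑ j ∈ range k, ((j : ℝ) * δ j + (r * j + σ j) * βs j) = k - σk * βk)
    (h2 : ∑ j ∈ range k, ((j : ℝ) ^ 2 * δ j + (r * j ^ 2 + 2 * j * σ j) * βs j)
        = k * (k - 2 * σk * βk)) :
    r ≤ 2 := by
  by_contra! hr
  have hzero : ∑ j ∈ range k, (((j : ℝ) - k) ^ 2 * δ j
      + (r * ((j : ℝ) - k) ^ 2 + 2 * ((j : ℝ) - k) * σ j) * βs j) = 0 := by
    rw [sum_sq_sub_moment_eq, h0, h1, h2]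
    ring
  have hle : ∑ j ∈ range k, (r - 2) * (δ j + r * βs j) ≤ ∑ j ∈ range k, r * (((j : ℝ) - k) ^ 2
      * δ j + (r * ((j : ℝ) - k) ^ 2 + 2 * ((j : ℝ) - k) * σ j) * βs j) := by
    refine sum_le_sum fun j hj => ?_
    rw [mem_range] at hj
    have hjk : (j : ℝ) + 1 ≤ k := by exact_mod_cast hj
    have hσj : σ j ≤ 1 := by rcases hσ j hj with h | h | h <;> linarith
    exact sub_two_mul_le_mul_of_le_neg_one hr.le (by linarith) hσj (hδ j hj) (hβ j hj)
  rw [← mul_sum, ← mul_sum, h0, hzero] at hle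
  linarith

theorem dwssp_lmm_bound (k : ℕ) (hk : 1 ≤ k) (r : ℝ) (hr : 0 < r)
    (δ βs σ : ℕ → ℝ) (σk βk : ℝ)
    (hδ : ∀ j < k, 0 ≤ δ j) (hβ : ∀ j < k, 0 ≤ βs j)
    (hσ : ∀ j < k, σ j = -1 ∨ σ j = 0 ∨ σ j = 1)
    (hσk : σk = -1 ∨ σk = 0 ∨ σk = 1) (hβk : 0 ≤ βk)
    (h0 : ∑ j ∈ range k, (δ j + r * βs j) = 1)
    (h1 : ∑ j ∈ range k, ((j : ℝ) * δ j + (r * j + σ j) * βs j) = k - σk * βk)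
    (h2 : ∑ j ∈ range k, ((j : ℝ) ^ 2 * δ j + (r * j ^ 2 + 2 * j * σ j) * βs j)
        = k * (k - 2 * σk * βk)) :
    r ≤ 2 :=
  dwssp_lmm_bound_general k r δ βs σ σk βk hδ hβ hσ h0 h1 h2
end

section
/- Let k ≥ 1 and let reals δ_j ≥ 0, c_j for 0 ≤ j ≤ k−1 satisfy ∑_{j=0}^{k−1} (−(k−j)² δ_j + c_j) = 0, where each c_j = (−r(k−j)² + 2σ_j(k−j)) β*_j with β*_j ≥ 0, σ_j ∈ {−1,0,1}, and r > 0. If not all β*_j are zero or some δ_j > 0 forces the sum to be negative unless some term is nonnegative, then there exists j with 0 ≤ j ≤ k−1 such that −r(k−j)² + 2σ_j(k−j) ≥ 0, and consequently r ≤ 2. -/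
open Finset

/-! If every coefficient `-r (k-j)^2 + 2 σ_j (k-j)` were negative, every summand would be
`≤ 0`, so all of them vanish and all `δ_j`, `β*_j` are zero. A nonnegative coefficient gives
`r (k-j) ≤ 2 σ_j ≤ 2`, and `k - j ≥ 1`. -/

theorem exists_nonneg_coeff_of_sum_neg_mul_add_mul_eq_zero {ι : Type*} (s : Finset ι)
    (w a δ β : ι → ℝ) (hw : ∀ i ∈ s, 0 < w i) (hδ : ∀ i ∈ s, 0 ≤ δ i) (hβ : ∀ i ∈ s, 0 ≤ β i)
    (hsum : ∑ i ∈ s, (-w i * δ i + a i * β i) = 0)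
    (hnz : ¬ ∀ i ∈ s, δ i = 0 ∧ β i = 0) :
    ∃ i ∈ s, 0 ≤ a i := by
  by_contra! ha
  have hwδ : ∀ i ∈ s, 0 ≤ w i * δ i := fun i hi => mul_nonneg (hw i hi).le (hδ i hi)
  have haβ : ∀ i ∈ s, a i * β i ≤ 0 := fun i hi =>
    mul_nonpos_of_nonpos_of_nonneg (ha i hi).le (hβ i hi)
  have hterm : ∀ i ∈ s, -w i * δ i + a i * β i = 0 :=
    (sum_eq_zero_iff_of_nonpos fun i hi => by nlinarith [hwδ i hi, haβ i hi]).mp hsum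
  refine hnz fun i hi => ?_
  have hwδ0 : w i * δ i = 0 := by linarith [hterm i hi, hwδ i hi, haβ i hi]
  have haβ0 : a i * β i = 0 := by linarith [hterm i hi, hwδ i hi, haβ i hi]
  exact ⟨(mul_eq_zero.mp hwδ0).resolve_left (hw i hi).ne',
    (mul_eq_zero.mp haβ0).resolve_left (ha i hi).ne⟩

theorem le_two_of_neg_mul_sq_add_two_mul_nonneg {r σ x : ℝ} (hx : 1 ≤ x) (hσ : σ ≤ 1)
    (h : 0 ≤ -r * x ^ 2 + 2 * σ * x) : r ≤ 2 := by
  have hrx : r * x ≤ 2 := by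
    have : r * x * x ≤ 2 * x := by nlinarith
    exact le_of_mul_le_mul_right this (by linarith)
  rcases le_or_gt r 0 with hr | hr
  · linarith
  · nlinarith

theorem dwssp_lmm_key_step_general (k : ℕ) (r : ℝ)
    (δ βs σ c : ℕ → ℝ)
    (hδ : ∀ j < k, 0 ≤ δ j) (hβ : ∀ j < k, 0 ≤ βs j)
    (hσ : ∀ j < k, σ j = -1 ∨ σ j = 0 ∨ σ j = 1)
    (hc : ∀ j < k, c j = (-r * ((k : ℝ) - j) ^ 2 + 2 * σ j * ((k : ℝ) - j)) * βs j)
    (hsum : ∑ j ∈ range k, (-(((k : ℝ) - j) ^ 2) * δ j + c j) = 0)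
    (hnz : ¬ (∀ j < k, δ j = 0 ∧ βs j = 0)) :
    (∃ j < k, -r * ((k : ℝ) - j) ^ 2 + 2 * σ j * ((k : ℝ) - j) ≥ 0) ∧ r ≤ 2 := by
  have hkj : ∀ j < k, (1 : ℝ) ≤ (k : ℝ) - j := fun j hj => by
    have : (j : ℝ) + 1 ≤ k := by exact_mod_cast hj
    linarith
  have hsum' : ∑ j ∈ range k, (-(((k : ℝ) - j) ^ 2) * δ j
      + (-r * ((k : ℝ) - j) ^ 2 + 2 * σ j * ((k : ℝ) - j)) * βs j) = 0 := by
    rw [← hsum]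
    exact sum_congr rfl fun j hj => by rw [hc j (mem_range.mp hj)]
  obtain ⟨j, hj, hcoeff⟩ := exists_nonneg_coeff_of_sum_neg_mul_add_mul_eq_zero (range k)
    (fun j => ((k : ℝ) - j) ^ 2) _ δ βs
    (fun j hj => by nlinarith [hkj j (mem_range.mp hj)])
    (fun j hj => hδ j (mem_range.mp hj)) (fun j hj => hβ j (mem_range.mp hj)) hsum'
    (by simpa only [mem_range] using hnz)
  rw [mem_range] at hj
  have hσj : σ j ≤ 1 := by rcases hσ j hj with h | h | h <;> linarith
  exact ⟨⟨j, hj, hcoeff⟩, le_two_of_neg_mul_sq_add_two_mul_nonneg (hkj j hj) hσj hcoeff⟩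

theorem dwssp_lmm_key_step (k : ℕ) (hk : 1 ≤ k) (r : ℝ) (hr : 0 < r)
    (δ βs σ c : ℕ → ℝ)
    (hδ : ∀ j < k, 0 ≤ δ j) (hβ : ∀ j < k, 0 ≤ βs j)
    (hσ : ∀ j < k, σ j = -1 ∨ σ j = 0 ∨ σ j = 1)
    (hc : ∀ j < k, c j = (-r * ((k : ℝ) - j) ^ 2 + 2 * σ j * ((k : ℝ) - j)) * βs j)
    (hsum : ∑ j ∈ range k, (-(((k : ℝ) - j) ^ 2) * δ j + c j) = 0)
    (hnz : ¬ (∀ j < k, δ j = 0 ∧ βs j = 0)) :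
    (∃ j < k, -r * ((k : ℝ) - j) ^ 2 + 2 * σ j * ((k : ℝ) - j) ≥ 0) ∧ r ≤ 2 :=
  dwssp_lmm_key_step_general k r δ βs σ c hδ hβ hσ hc hsum hnz
end

section
/- Let L be a real n×n matrix and r > 0 a real number. Suppose a matrix-valued function of the form ψ(ΔtL, ΔtL̃) = (I + (Δt/r)L)² · (I + ((r²−4r+2)/(2r)) Δt L̃ − ((r²−2r−2)/(2r)) Δt L − ((r²−4r+1)/(2r²)) Δt² L L̃)^{−1} is well-defined for small Δt (with L̃ another n×n matrix). Then its first-order Taylor expansion in Δt is ψ = I + Δt L + ((r²−4r+2)/(2r)) Δt (L − L̃) + O(Δt²). -/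
/-!
Write `D(t)` for the denominator and `E(t) = I + tL + a t (L - L̃)` for the claimed expansion.
Multiplying out, `(I + (t/r) L)² - E(t) D(t)` is `t²` times a polynomial in `t`, so
`ψ(t) - E(t) = t² · (polynomial) · D(t)⁻¹`, and `D(t)⁻¹` stays bounded near `0` because `D(0) = I`.
-/

open Filter Asymptotics

attribute [local instance] Matrix.normedAddCommGroup Matrix.normedSpace

/-- In the paper's notation the denominator of the update is
`I + a Δt L̃ - b Δt L - c Δt² L L̃`. -/
noncomputable def dwrkCoeffA (r : ℝ) : ℝ := (r ^ 2 - 4 * r + 2) / (2 * r)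

noncomputable def dwrkCoeffB (r : ℝ) : ℝ := (r ^ 2 - 2 * r - 2) / (2 * r)

noncomputable def dwrkCoeffC (r : ℝ) : ℝ := (r ^ 2 - 4 * r + 1) / (2 * r ^ 2)

section Algebra

variable {A : Type*} [Ring A] [Algebra ℝ A]

noncomputable def dwrkDenominator (r : ℝ) (L Lt : A) (t : ℝ) : A :=
  1 + (dwrkCoeffA r * t) • Lt - (dwrkCoeffB r * t) • L - (dwrkCoeffC r * t ^ 2) • (L * Lt)

@[simp]
theorem dwrkDenominator_zero (r : ℝ) (L Lt : A) : dwrkDenominator r L Lt 0 = 1 := by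
  simp [dwrkDenominator]

noncomputable def dwrkFirstOrder (r : ℝ) (L Lt : A) (t : ℝ) : A :=
  1 + t • L + (dwrkCoeffA r * t) • (L - Lt)

noncomputable def dwrkRemainder (r : ℝ) (L Lt : A) (t : ℝ) : A :=
  let a := dwrkCoeffA r
  let b := dwrkCoeffB r
  let c := dwrkCoeffC r
  (1 / r ^ 2 + (1 + a) * b) • (L * L) + (c - (1 + a) * a) • (L * Lt) - (a * b) • (Lt * L)
    + a ^ 2 • (Lt * Lt) + (c * (1 + a) * t) • (L * (L * Lt)) - (c * a * t) • (Lt * (L * Lt))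

/-- The constant and linear terms cancel because `1 + a - b = 2 / r`. -/
theorem dwrk_numerator_sub_firstOrder_mul {r : ℝ} (hr : r ≠ 0) (L Lt : A) (t : ℝ) :
    (1 + (t / r) • L) ^ 2 - dwrkFirstOrder r L Lt t * dwrkDenominator r L Lt t
      = t ^ 2 • dwrkRemainder r L Lt t := by
  simp only [dwrkFirstOrder, dwrkDenominator, dwrkRemainder, dwrkCoeffA, dwrkCoeffB,
    dwrkCoeffC, sq, mul_add, add_mul, mul_sub, sub_mul, smul_mul_assoc, mul_smul_comm,
    mul_one, one_mul, smul_smul, smul_sub, smul_add]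
  match_scalars <;> field_simp <;> ring

end Algebra

theorem Asymptotics.isBigO_sq_of_eventuallyEq_sq_smul {E : Type*} [NormedAddCommGroup E]
    [NormedSpace ℝ E] {f g : ℝ → E} (hfg : f =ᶠ[nhds 0] fun t => t ^ 2 • g t)
    (hg : ContinuousAt g 0) : f =O[nhds 0] fun t => t ^ 2 := by
  have h := (isBigO_refl (fun t : ℝ => t ^ 2) (nhds 0)).smul (hg.isBigO_one ℝ)
  simp only [smul_eq_mul, mul_one] at h
  exact h.congr' hfg.symm EventuallyEq.rfl

theorem continuousAt_dwrkRemainder_mul_inv {m : Type*} [Fintype m] [DecidableEq m] (r : ℝ)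
    (L Lt : Matrix m m ℝ) :
    ContinuousAt (fun t => dwrkRemainder r L Lt t * (dwrkDenominator r L Lt t)⁻¹) 0 := by
  have hdenom : Continuous (dwrkDenominator r L Lt) := by
    unfold dwrkDenominator; fun_prop
  have hinv : ContinuousAt Inv.inv (dwrkDenominator r L Lt 0) := by
    refine continuousAt_matrix_inv _ ?_
    rw [dwrkDenominator_zero, Matrix.det_one]
    exact NormedRing.inverse_continuousAt (1 : ℝˣ)
  refine ContinuousAt.mul ?_ (hinv.comp hdenom.continuousAt)
  unfold dwrkRemainder; fun_prop

theorem dwrk_update_matrix_expansion (n : ℕ) (L Lt : Matrix (Fin n) (Fin n) ℝ)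
    (r : ℝ) (hr : 0 < r) (ψ : ℝ → Matrix (Fin n) (Fin n) ℝ)
    (hψ : ∀ᶠ Δt in nhds (0 : ℝ),
      IsUnit ((1 + (((r ^ 2 - 4 * r + 2) / (2 * r)) * Δt) • Lt
          - (((r ^ 2 - 2 * r - 2) / (2 * r)) * Δt) • L
          - (((r ^ 2 - 4 * r + 1) / (2 * r ^ 2)) * Δt ^ 2) • (L * Lt)).det) ∧
        ψ Δt = (1 + (Δt / r) • L) ^ 2 *
          (1 + (((r ^ 2 - 4 * r + 2) / (2 * r)) * Δt) • Lt
            - (((r ^ 2 - 2 * r - 2) / (2 * r)) * Δt) • L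
            - (((r ^ 2 - 4 * r + 1) / (2 * r ^ 2)) * Δt ^ 2) • (L * Lt))⁻¹) :
    (fun Δt : ℝ => ψ Δt - (1 + Δt • L + (((r ^ 2 - 4 * r + 2) / (2 * r)) * Δt) • (L - Lt)))
      =O[nhds 0] (fun Δt : ℝ => Δt ^ 2) := by
  refine isBigO_sq_of_eventuallyEq_sq_smul ?_ (continuousAt_dwrkRemainder_mul_inv r L Lt)
  filter_upwards [hψ] with t ⟨hdet, hψt⟩
  have hcancel : dwrkDenominator r L Lt t * (dwrkDenominator r L Lt t)⁻¹ = 1 :=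
    Matrix.mul_nonsing_inv _ hdet
  have hψt : ψ t = (1 + (t / r) • L) ^ 2 * (dwrkDenominator r L Lt t)⁻¹ := hψt
  change ψ t - dwrkFirstOrder r L Lt t = _
  rw [hψt, ← smul_mul_assoc, ← dwrk_numerator_sub_firstOrder_mul hr.ne', sub_mul, mul_assoc,
    hcancel, mul_one]
end
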